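/- arXiv:0802.3190 — 2 statements merged into one kernel-verified Lean document; each statement's English description precedes it below -/
import Mathlib

section
/- In particular, λ(U_i^α(x)) → 0 uniformly in x ∈ D_I^δ as α → 0: for every ε > 0 there exists α₀ > 0 such that for all 0 < α < α₀ and all x ∈ D_I^δ, the Lebesgue measure of the set of points changing Voronoi cell under a perturbation of x_i by less than α (staying in D_I^δ) is less than ε. -/
open MeasureTheory Finset

noncomputable section

abbrev Eu (d : ℕ) := EuclideanSpace ℝ (Fin d)

def cube (d : ℕ) : Set (Eu d) := {ω | ∀ i, ω i ∈ Set.Icc (0:ℝ) 1}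

def vIndex {d : ℕ} {ι : Type*} [Fintype ι] [LinearOrder ι] [Nonempty ι]
    (x : ι → Eu d) (ω : Eu d) : ι :=
  (Finset.univ.filter fun i => ∀ j, dist (x i) ω ≤ dist (x j) ω).min' (by
    obtain ⟨i, -, hi⟩ := Finset.exists_min_image Finset.univ
      (fun j => dist (x j) ω) ⟨Classical.arbitrary ι, Finset.mem_univ _⟩
    exact ⟨i, Finset.mem_filter.2 ⟨Finset.mem_univ _,
      fun j => hi j (Finset.mem_univ _)⟩⟩)

def vCell {d : ℕ} {ι : Type*} [Fintype ι] [LinearOrder ι] [Nonempty ι]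
    (x : ι → Eu d) (i : ι) : Set (Eu d) :=
  {ω ∈ cube d | vIndex x ω = i}

def sep {d : ℕ} {ι : Type*} (δ : ℝ) : Set (ι → Eu d) :=
  {x | (∀ i, x i ∈ cube d) ∧ ∀ i j, i ≠ j → δ ≤ dist (x i) (x j)}

def gfun {d : ℕ} {ι : Type*} [Fintype ι] [LinearOrder ι] [Nonempty ι]
    (Λ : ι → ι → ℝ) (x : ι → Eu d) (ω : Eu d) : ℝ :=
  ∑ j, Λ (vIndex x ω) j * ‖x j - ω‖ ^ 2

def extVar {d : ℕ} {ι : Type*} [Fintype ι] [LinearOrder ι] [Nonempty ι]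
    (Λ : ι → ι → ℝ) (P : Measure (Eu d)) (x : ι → Eu d) : ℝ :=
  (1/2) * ∑ i, ∑ j, Λ i j * ∫ ω in vCell x i, ‖x j - ω‖ ^ 2 ∂P

def Uset {d : ℕ} {ι : Type*} [Fintype ι] [LinearOrder ι] [Nonempty ι]
    (δ α : ℝ) (x : ι → Eu d) (i : ι) : Set (Eu d) :=
  {ω | ∃ y ∈ (sep δ : Set (ι → Eu d)),
        (∀ j, j ≠ i → y j = x j) ∧ dist (x i) (y i) < α ∧
        ω ∈ vCell x i \ vCell y i}

/-! If `ω` leaves the cell of `x i` when `x i` moves by less than `α`, then some other centroid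
`x j` has `d(x i, ω) ≤ d(x j, ω) ≤ d(x i, ω) + α`. As distances in the unit cube are at most `√d`
and `‖x i - x j‖ ≥ δ`, such an `ω` lies in a slab of width `√d α / δ` orthogonal to `x i - x j`,
whose intersection with the ball of radius `√d` has volume at most `(√d α / δ) (2√d) ^ (d - 1)`.
Summing over `j` bounds `λ(U_i^α(x))` by a constant times `α`, uniformly in `x`. -/

open scoped RealInnerProductSpace

def slab {F : Type*} [NormedAddCommGroup F] [InnerProductSpace ℝ F] (u : F) (a w : ℝ) : Set F :=
  {ω | ⟪u, ω⟫ ∈ Set.Icc a (a + w)}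

theorem volume_closedBall_inter_slab_le {F : Type*} [NormedAddCommGroup F]
    [InnerProductSpace ℝ F] [FiniteDimensional ℝ F] [MeasurableSpace F] [BorelSpace F]
    {u : F} (hu : ‖u‖ = 1) {R : ℝ} (hR : 0 ≤ R) (a w : ℝ) :
    volume (Metric.closedBall 0 R ∩ slab u a w)
      ≤ ENNReal.ofReal (w * (2 * R) ^ (Module.finrank ℝ F - 1)) := by
  set n := Module.finrank ℝ F
  have : Nontrivial F := ⟨u, 0, by rintro rfl; simp at hu⟩
  set k₀ : Fin n := ⟨0, Module.finrank_pos⟩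
  obtain ⟨b, hb⟩ := (Orthonormal.exists_orthonormalBasis_extension_of_card_eq (𝕜 := ℝ)
    (v := fun _ : Fin n => u) (s := {k₀}) (by simp [n])
    ⟨fun _ => hu, fun i j hij => absurd (Subsingleton.elim i j) hij⟩)
  have hbk₀ : b k₀ = u := hb k₀ rfl
  -- in the coordinates of `b`, the set lies in a box with side `w` along `u` and `2R` elsewhere
  let I : Fin n → Set ℝ := fun k => if k = k₀ then Set.Icc a (a + w) else Set.Icc (-R) R
  have hsub : Metric.closedBall 0 R ∩ slab u a w ⊆ (WithLp.ofLp ∘ b.repr) ⁻¹' Set.univ.pi I := by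
    rintro ω ⟨hωR, hωu⟩ k -
    by_cases hk : k = k₀
    · subst hk
      simpa [I, slab, b.repr_apply_apply, hbk₀] using hωu
    · have : |b.repr ω k| ≤ R :=
        ((PiLp.norm_apply_le (b.repr ω) k).trans_eq (b.repr.norm_map ω)).trans
          (mem_closedBall_zero_iff.1 hωR)
      simpa [I, hk] using abs_le.1 this
  have hpres := (PiLp.volume_preserving_ofLp (Fin n)).comp b.measurePreserving_repr
  calc volume (Metric.closedBall 0 R ∩ slab u a w)
      ≤ volume ((WithLp.ofLp ∘ b.repr) ⁻¹' Set.univ.pi I) := measure_mono hsub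
    _ = ∏ k, volume (I k) := by
      rw [hpres.measure_preimage (MeasurableSet.univ_pi fun k => by
        by_cases hk : k = k₀ <;> simp [I, hk]).nullMeasurableSet, volume_pi_pi]
    _ = ENNReal.ofReal w * ENNReal.ofReal (2 * R) ^ (n - 1) := by
      classical
      have hcompl : ∀ k ∈ ({k₀}ᶜ : Finset (Fin n)), volume (I k) = ENNReal.ofReal (2 * R) := by
        intro k hk
        simp only [I, if_neg (by simpa using hk), Real.volume_Icc]
        ring_nf
      rw [Fintype.prod_eq_mul_prod_compl k₀, Finset.prod_congr rfl hcompl, Finset.prod_const,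
        Finset.card_compl, Finset.card_singleton, Fintype.card_fin]
      simp [I, Real.volume_Icc]
    _ = ENNReal.ofReal (w * (2 * R) ^ (n - 1)) := by
      rw [← ENNReal.ofReal_pow (by positivity), ← ENNReal.ofReal_mul' (by positivity)]

theorem mem_slab_of_dist_le_dist_le_add {E : Type*} [NormedAddCommGroup E]
    [InnerProductSpace ℝ E] {p q ω : E} {R α : ℝ} (hpq : p ≠ q) (hqR : dist q ω ≤ R)
    (h₁ : dist p ω ≤ dist q ω) (h₂ : dist q ω ≤ dist p ω + α) :
    ω ∈ slab (‖p - q‖⁻¹ • (p - q)) ((‖p‖ ^ 2 - ‖q‖ ^ 2) / (2 * ‖p - q‖)) (R * α / ‖p - q‖) := by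
  have hpq' : 0 < ‖p - q‖ := norm_pos_iff.2 (sub_ne_zero.2 hpq)
  have hD : dist q ω ^ 2 - dist p ω ^ 2 = ‖q‖ ^ 2 - ‖p‖ ^ 2 + 2 * ⟪p - q, ω⟫ := by
    rw [dist_eq_norm, dist_eq_norm, norm_sub_sq_real, norm_sub_sq_real, inner_sub_left]
    ring
  have hD₀ : 0 ≤ dist q ω ^ 2 - dist p ω ^ 2 := by nlinarith [dist_nonneg (x := p) (y := ω)]
  have hD₁ : dist q ω ^ 2 - dist p ω ^ 2 ≤ 2 * R * α := by
    nlinarith [dist_nonneg (x := p) (y := ω)]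
  have hinner : ⟪‖p - q‖⁻¹ • (p - q), ω⟫
      = (‖p‖ ^ 2 - ‖q‖ ^ 2) / (2 * ‖p - q‖) + (dist q ω ^ 2 - dist p ω ^ 2) / (2 * ‖p - q‖) := by
    rw [real_inner_smul_left, hD]
    field_simp
    ring
  rw [slab, Set.mem_ofPred_eq, hinner]
  constructor
  · linarith [div_nonneg hD₀ (by positivity : (0 : ℝ) ≤ 2 * ‖p - q‖)]
  · have : (dist q ω ^ 2 - dist p ω ^ 2) / (2 * ‖p - q‖) ≤ R * α / ‖p - q‖ := by
      rw [div_le_div_iff₀ (by positivity) hpq']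
      nlinarith
    linarith

theorem EuclideanSpace.norm_le_sqrt_card_of_forall_abs_le_one {ι : Type*} [Fintype ι]
    {v : EuclideanSpace ℝ ι} (hv : ∀ k, |v k| ≤ 1) : ‖v‖ ≤ √(Fintype.card ι) := by
  rw [EuclideanSpace.norm_eq]
  gcongr
  calc ∑ k, ‖v k‖ ^ 2 ≤ ∑ _k : ι, (1 : ℝ) :=
        Finset.sum_le_sum fun k _ => by
          rw [Real.norm_eq_abs, sq_abs]
          nlinarith [hv k, abs_nonneg (v k), sq_abs (v k)]
    _ = Fintype.card ι := by simp

theorem dist_le_sqrt_of_mem_cube {d : ℕ} {p q : Eu d} (hp : p ∈ cube d) (hq : q ∈ cube d) :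
    dist p q ≤ √d := by
  have hpq : ∀ k, |(p - q) k| ≤ 1 := fun k => by
    rw [PiLp.sub_apply, abs_sub_le_iff]
    constructor <;> linarith [(hp k).1, (hp k).2, (hq k).1, (hq k).2]
  simpa [dist_eq_norm] using EuclideanSpace.norm_le_sqrt_card_of_forall_abs_le_one hpq

theorem zero_mem_cube (d : ℕ) : (0 : Eu d) ∈ cube d := fun _ => by simp

theorem cube_subset_closedBall (d : ℕ) : cube d ⊆ Metric.closedBall 0 √d :=
  fun _ hω => dist_le_sqrt_of_mem_cube hω (zero_mem_cube d)

theorem dist_vIndex_le {d : ℕ} {ι : Type*} [Fintype ι] [LinearOrder ι] [Nonempty ι]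
    (x : ι → Eu d) (ω : Eu d) (j : ι) : dist (x (vIndex x ω)) ω ≤ dist (x j) ω := by
  unfold vIndex
  exact (Finset.mem_filter.1 (Finset.min'_mem
    (Finset.univ.filter fun k => ∀ l, dist (x k) ω ≤ dist (x l) ω) _)).2 j

theorem exists_dist_le_dist_le_add_of_mem_Uset {d : ℕ} {ι : Type*} [Fintype ι] [LinearOrder ι]
    [Nonempty ι] {δ α : ℝ} {x : ι → Eu d} {i : ι} {ω : Eu d} (hω : ω ∈ Uset δ α x i) :
    ω ∈ cube d ∧ ∃ j ≠ i, dist (x i) ω ≤ dist (x j) ω ∧ dist (x j) ω ≤ dist (x i) ω + α := by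
  obtain ⟨y, -, hyx, hyi, ⟨hωc, hxω⟩, hyω⟩ := hω
  have hji : vIndex y ω ≠ i := fun h => hyω ⟨hωc, h⟩
  refine ⟨hωc, vIndex y ω, hji, ?_, ?_⟩
  · simpa only [hxω] using dist_vIndex_le x ω (vIndex y ω)
  calc dist (x (vIndex y ω)) ω = dist (y (vIndex y ω)) ω := by rw [hyx _ hji]
    _ ≤ dist (y i) ω := dist_vIndex_le y ω i
    _ ≤ dist (x i) (y i) + dist (x i) ω := dist_triangle_left _ _ _
    _ ≤ dist (x i) ω + α := by linarith

theorem le_norm_sub_of_mem_sep {d : ℕ} {ι : Type*} {δ : ℝ} {x : ι → Eu d}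
    (hx : x ∈ (sep δ : Set (ι → Eu d))) {i j : ι} (hij : i ≠ j) : δ ≤ ‖x i - x j‖ :=
  dist_eq_norm (x i) (x j) ▸ hx.2 i j hij

theorem Uset_subset_biUnion_slab {d : ℕ} {ι : Type*} [Fintype ι] [LinearOrder ι] [Nonempty ι]
    {δ : ℝ} (hδ : 0 < δ) (α : ℝ) {x : ι → Eu d} (hx : x ∈ (sep δ : Set (ι → Eu d))) (i : ι) :
    Uset δ α x i ⊆ ⋃ j ∈ Finset.univ.erase i, Metric.closedBall 0 √d ∩
      slab (‖x i - x j‖⁻¹ • (x i - x j)) ((‖x i‖ ^ 2 - ‖x j‖ ^ 2) / (2 * ‖x i - x j‖))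
        (√d * α / δ) := by
  intro ω hω
  obtain ⟨hωc, j, hji, h₁, h₂⟩ := exists_dist_le_dist_le_add_of_mem_Uset hω
  have hδij := le_norm_sub_of_mem_sep hx hji.symm
  have hxij : 0 < ‖x i - x j‖ := hδ.trans_le hδij
  have hslab := mem_slab_of_dist_le_dist_le_add (sub_ne_zero.1 (norm_pos_iff.1 hxij))
    (dist_le_sqrt_of_mem_cube (hx.1 j) hωc) h₁ h₂
  have hwidth : √d * α / ‖x i - x j‖ ≤ √d * α / δ :=
    div_le_div_of_nonneg_left (mul_nonneg (Real.sqrt_nonneg _) (by linarith)) hδ hδij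
  refine Set.mem_biUnion (Finset.mem_erase.2 ⟨hji, Finset.mem_univ j⟩)
    ⟨cube_subset_closedBall d hωc, hslab.1, hslab.2.trans (by linarith)⟩

theorem volume_Uset_le {d : ℕ} {ι : Type*} [Fintype ι] [LinearOrder ι] [Nonempty ι]
    {δ : ℝ} (hδ : 0 < δ) (α : ℝ) {x : ι → Eu d} (hx : x ∈ (sep δ : Set (ι → Eu d))) (i : ι) :
    volume (Uset δ α x i)
      ≤ ENNReal.ofReal (α * (Fintype.card ι * (√d / δ) * (2 * √d) ^ (d - 1))) := by
  set c := √d * α / δ * (2 * √d) ^ (d - 1)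
  have hslab : ∀ j ≠ i, volume (Metric.closedBall 0 √d ∩
      slab (‖x i - x j‖⁻¹ • (x i - x j)) ((‖x i‖ ^ 2 - ‖x j‖ ^ 2) / (2 * ‖x i - x j‖))
        (√d * α / δ)) ≤ ENNReal.ofReal c := by
    intro j hji
    have hxij : 0 < ‖x i - x j‖ := hδ.trans_le (le_norm_sub_of_mem_sep hx hji.symm)
    have hu : ‖‖x i - x j‖⁻¹ • (x i - x j)‖ = 1 := by
      rw [norm_smul, norm_inv, norm_norm, inv_mul_cancel₀ hxij.ne']
    simpa [c, finrank_euclideanSpace_fin] using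
      volume_closedBall_inter_slab_le hu (Real.sqrt_nonneg d) _ (√d * α / δ)
  calc volume (Uset δ α x i)
      ≤ ∑ j ∈ Finset.univ.erase i, ENNReal.ofReal c :=
        (measure_mono (Uset_subset_biUnion_slab hδ α hx i)).trans <|
          (measure_biUnion_finset_le _ _).trans
            (Finset.sum_le_sum fun j hj => hslab j (Finset.ne_of_mem_erase hj))
    _ ≤ Fintype.card ι * ENNReal.ofReal c := by
        rw [Finset.sum_const, nsmul_eq_mul]
        gcongr
        exact_mod_cast (Finset.card_le_univ _)
    _ = ENNReal.ofReal (α * (Fintype.card ι * (√d / δ) * (2 * √d) ^ (d - 1))) := by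
        rw [← ENNReal.ofReal_natCast, ← ENNReal.ofReal_mul (Nat.cast_nonneg _)]
        congr 1
        simp only [c]
        ring

theorem stmt5 {d : ℕ} {ι : Type*} [Fintype ι] [LinearOrder ι] [Nonempty ι]
    (δ : ℝ) (hδ : 0 < δ) (i : ι) :
    ∀ ε > (0:ℝ), ∃ α₀ > (0:ℝ), ∀ α, 0 < α → α < α₀ →
      ∀ x ∈ (sep δ : Set (ι → Eu d)),
        volume (Uset δ α x i) < ENNReal.ofReal ε := by
  intro ε hε
  set C := (Fintype.card ι : ℝ) * (√d / δ) * (2 * √d) ^ (d - 1)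
  have hC : 0 ≤ C := by positivity
  refine ⟨ε / (C + 1), by positivity, fun α hα hαε x hx => ?_⟩
  have hαC : α * C < ε := by
    rw [lt_div_iff₀ (by positivity)] at hαε
    nlinarith
  exact (volume_Uset_le hδ α hx i).trans_lt ((ENNReal.ofReal_lt_ofReal_iff hε).2 hαC)
end
end

section
/- For every x⁰ ∈ D_I^δ and ε > 0, there exists α > 0 such that, letting W(x⁰) be the set of ω ∈ [0,1]^d whose Voronoi index is the same for x⁰ and for every x ∈ D_I^δ with max_i ‖x_i - x⁰_i‖ < α, one has ∫_{W(x⁰)} ( g_{x⁰}(ω) - inf_{x: max_i‖x_i - x⁰_i‖<α} g_x(ω) ) dP(ω) < ε/2, where P is any probability measure on [0,1]^d with density bounded by B with respect to Lebesgue measure. -/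
open MeasureTheory Finset

noncomputable section

/-!
On the set `W` where every admissible `x` has the same Voronoi index as `x⁰`, the weights
`Λ (vIndex x ω) j` in `g_x ω` and `g_{x⁰} ω` coincide, so `g_{x⁰} ω - g_x ω` is a sum of
`|I|` differences `Λ (‖x⁰_j - ω‖² - ‖x_j - ω‖²)`, each at most `2 √d α` on the unit cube.
Hence the integrand is bounded by `2 |I| √d α` on `W`, and `P` is a probability measure.
-/

lemma sq_norm_sub_sq_norm_le {E : Type*} [SeminormedAddCommGroup E] {u v : E} {R α : ℝ}
    (hu : ‖u‖ ≤ R) (huv : ‖u - v‖ ≤ α) : ‖u‖ ^ 2 - ‖v‖ ^ 2 ≤ 2 * R * α := by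
  have hsub : ‖u‖ - ‖v‖ ≤ α := (norm_sub_norm_le u v).trans huv
  have hR : 0 ≤ R := (norm_nonneg u).trans hu
  have hα : 0 ≤ α := (norm_nonneg _).trans huv
  rcases le_total ‖u‖ ‖v‖ with hle | hle
  · have : ‖u‖ ^ 2 ≤ ‖v‖ ^ 2 := by gcongr
    linarith [mul_nonneg (mul_nonneg zero_le_two hR) hα]
  · calc ‖u‖ ^ 2 - ‖v‖ ^ 2 = (‖u‖ - ‖v‖) * (‖u‖ + ‖v‖) := by ring
      _ ≤ α * (‖u‖ + ‖u‖) := by gcongr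
      _ ≤ 2 * R * α := by linarith [mul_le_mul_of_nonneg_left hu hα]

lemma norm_sub_le_sqrt_of_mem_cube {d : ℕ} {a ω : Eu d} (ha : a ∈ cube d) (hω : ω ∈ cube d) :
    ‖a - ω‖ ≤ √d := by
  rw [EuclideanSpace.norm_eq]
  refine Real.sqrt_le_sqrt ((sum_le_card_nsmul _ _ 1 fun i _ => ?_).trans_eq (by simp))
  obtain ⟨ha0, ha1⟩ := ha i
  obtain ⟨hω0, hω1⟩ := hω i
  rw [PiLp.sub_apply, Real.norm_eq_abs, sq_abs]
  nlinarith

section gfun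

variable {d : ℕ} {ι : Type*} [Fintype ι] [LinearOrder ι] [Nonempty ι] {Λ : ι → ι → ℝ}

lemma gfun_nonneg (hΛ : ∀ i j, 0 ≤ Λ i j) (x : ι → Eu d) (ω : Eu d) : 0 ≤ gfun Λ x ω :=
  sum_nonneg fun j _ => mul_nonneg (hΛ _ j) (sq_nonneg _)

lemma gfun_sub_gfun_le_of_vIndex_eq (hΛ : ∀ i j, Λ i j ∈ Set.Icc (0:ℝ) 1)
    {x y : ι → Eu d} {ω : Eu d} {R α : ℝ} (hidx : vIndex x ω = vIndex y ω)
    (hy : ∀ j, ‖y j - ω‖ ≤ R) (hxy : ∀ j, dist (x j) (y j) ≤ α) :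
    gfun Λ y ω - gfun Λ x ω ≤ Fintype.card ι * (2 * R) * α := by
  rw [gfun, gfun, hidx, ← sum_sub_distrib]
  refine (sum_le_card_nsmul _ _ (2 * R * α) fun j _ => ?_).trans_eq
    (by rw [nsmul_eq_mul, card_univ]; ring)
  have hsq := sq_norm_sub_sq_norm_le (v := x j - ω) (α := α) (hy j)
    (by rw [sub_sub_sub_cancel_right, ← dist_eq_norm, dist_comm]; exact hxy j)
  have hc : 0 ≤ 2 * R * α := by
    have := (norm_nonneg _).trans (hy j)
    have := dist_nonneg.trans (hxy j)
    positivity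
  obtain ⟨h0, h1⟩ := hΛ (vIndex y ω) j
  nlinarith [mul_nonneg h0 (sub_nonneg.2 hsq), mul_nonneg (sub_nonneg.2 h1) hc]

lemma abs_gfun_sub_iInf_le (hΛ : ∀ i j, 0 ≤ Λ i j) {p : (ι → Eu d) → Prop} {x₀ : ι → Eu d}
    (hx₀ : p x₀) {ω : Eu d} {C : ℝ} (hC : ∀ x, p x → gfun Λ x₀ ω - gfun Λ x ω ≤ C) :
    |gfun Λ x₀ ω - ⨅ x : {x // p x}, gfun Λ x.1 ω| ≤ C := by
  have : Nonempty {x // p x} := ⟨⟨x₀, hx₀⟩⟩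
  have hbdd : BddBelow (Set.range fun x : {x // p x} => gfun Λ x.1 ω) :=
    ⟨0, by rintro _ ⟨x, rfl⟩; exact gfun_nonneg hΛ _ _⟩
  rw [abs_of_nonneg (sub_nonneg.2 (ciInf_le hbdd ⟨x₀, hx₀⟩)), sub_le_comm]
  exact le_ciInf fun x => by linarith [hC x.1 x.2]

end gfun

theorem stmt9_general {d : ℕ} {ι : Type*} [Fintype ι] [LinearOrder ι] [Nonempty ι]
    (Λ : ι → ι → ℝ) (hΛmem : ∀ i j, Λ i j ∈ Set.Icc (0:ℝ) 1)
    (δ : ℝ)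
    (P : Measure (Eu d)) [IsProbabilityMeasure P]
    (x0 : ι → Eu d) (hx0 : x0 ∈ (sep δ : Set (ι → Eu d)))
    (ε : ℝ) (hε : 0 < ε) :
    ∃ α > (0:ℝ),
      ∫ ω in {ω ∈ cube d | ∀ x ∈ (sep δ : Set (ι → Eu d)),
                (∀ i, dist (x i) (x0 i) < α) → vIndex x ω = vIndex x0 ω},
        (gfun Λ x0 ω -
          ⨅ x : {x : ι → Eu d // x ∈ (sep δ : Set (ι → Eu d)) ∧
                  ∀ i, dist (x i) (x0 i) < α}, gfun Λ x.1 ω) ∂P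
      < ε / 2 := by
  set K : ℝ := Fintype.card ι * (2 * √d)
  have hK : 0 ≤ K := by positivity
  set α := ε / (2 * (K + 1))
  have hα : 0 < α := by positivity
  refine ⟨α, hα, (Real.le_norm_self _).trans_lt
    ((norm_setIntegral_le_of_norm_le_const (C := K * α) (measure_lt_top _ _) ?_).trans_lt ?_)⟩
  · rintro ω ⟨hω, hW⟩
    refine abs_gfun_sub_iInf_le (fun i j => (hΛmem i j).1) ⟨hx0, fun i => by simpa using hα⟩ ?_
    rintro x ⟨hx, hxα⟩
    exact gfun_sub_gfun_le_of_vIndex_eq hΛmem (hW x hx hxα)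
      (fun j => norm_sub_le_sqrt_of_mem_cube (hx0.1 j) hω) fun j => (hxα j).le
  · calc K * α * P.real _ ≤ K * α := mul_le_of_le_one_right (by positivity) measureReal_le_one
      _ < (K + 1) * α := by linarith
      _ = ε / 2 := by simp only [α]; field_simp

theorem stmt9 {d : ℕ} {ι : Type*} [Fintype ι] [LinearOrder ι] [Nonempty ι]
    (Λ : ι → ι → ℝ) (hΛmem : ∀ i j, Λ i j ∈ Set.Icc (0:ℝ) 1)
    (hΛsymm : ∀ i j, Λ i j = Λ j i) (hΛ0 : ∀ i, Λ i i = 1)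
    (δ B : ℝ) (hδ : 0 < δ) (hB : 0 < B)
    (P : Measure (Eu d)) [IsProbabilityMeasure P] (hPcube : P (cube d) = 1)
    (hPB : ∀ s : Set (Eu d), MeasurableSet s →
      P s ≤ ENNReal.ofReal B * volume s)
    (x0 : ι → Eu d) (hx0 : x0 ∈ (sep δ : Set (ι → Eu d)))
    (ε : ℝ) (hε : 0 < ε) :
    ∃ α > (0:ℝ),
      ∫ ω in {ω ∈ cube d | ∀ x ∈ (sep δ : Set (ι → Eu d)),
                (∀ i, dist (x i) (x0 i) < α) → vIndex x ω = vIndex x0 ω},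
        (gfun Λ x0 ω -
          ⨅ x : {x : ι → Eu d // x ∈ (sep δ : Set (ι → Eu d)) ∧
                  ∀ i, dist (x i) (x0 i) < α}, gfun Λ x.1 ω) ∂P
      < ε / 2 :=
  stmt9_general Λ hΛmem δ P x0 hx0 ε hε
end
end
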